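/- Let (A, α, ℤ₊^d) be a C*-dynamical system. Set 𝒥_F := (⋂_{j∈F} ker α_j)^⊥ for ∅ ≠ F ⊆ [d], 𝒥_∅ := {0}, and 𝓘_F := ⋂_{n ⊥ F} α_n^{-1}(𝒥_F). Then: (a) 𝓘_F ⊆ 𝒥_F for every F ⊆ [d]; (b) the families are partially ordered: F₁ ⊆ F₂ ⊆ [d] implies 𝒥_{F₁} ⊆ 𝒥_{F₂} and 𝓘_{F₁} ⊆ 𝓘_{F₂}; (c) 𝓘_F is F^⊥-invariant: α_n(𝓘_F) ⊆ 𝓘_F for every n ⊥ F; and (d) 𝓘_F is the largest such ideal in 𝒥_F: if K ⊆ 𝒥_F is a two-sided ideal with α_n(K) ⊆ K for all n ⊥ F, then K ⊆ 𝓘_F. (This is the specialisation to C*-dynamical systems of the properties of the families 𝒥 and 𝓘 recorded in Sections 1.3 and 2.3 of the paper.) -/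

import Mathlib

/-- `α_n := α₁^[n₁] ∘ ⋯ ∘ α_d^[n_d]` for `n ∈ ℤ₊^d`. -/
def alphaComp {A : Type*} {d : ℕ} (α : Fin d → (A → A)) (n : Fin d → ℕ) : A → A :=
  (List.finRange d).foldr (fun i f => (α i)^[n i] ∘ f) id

/-- `I` is a two-sided ideal of the (possibly non-unital) ring `A`. -/
def IsTwoSidedIdealSet {A : Type*} [NonUnitalNonAssocRing A] (I : Set A) : Prop :=
  (0 : A) ∈ I ∧ (∀ x ∈ I, ∀ y ∈ I, x + y ∈ I) ∧ (∀ x ∈ I, -x ∈ I) ∧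
    (∀ a : A, ∀ x ∈ I, a * x ∈ I) ∧ (∀ a : A, ∀ x ∈ I, x * a ∈ I)

/-!
Only the semigroup law `α_{m+n} = α_m ∘ α_n`, which holds because the `α_i` commute, matters:
for any action of a monoid `M` and any submonoid `N`, the set `⋂_{n ∈ N} α_n⁻¹(S)` is the largest
`N`-invariant subset of `S`. Applied to `S = 𝒥_F` and `N = {n | n ⊥ F}` this gives (a), (c) and
(d), while (b) follows since `𝒥_F` grows and `{n | n ⊥ F}` shrinks as `F` grows.
-/

section Iterates

variable {ι A : Type*} (α : ι → A → A)

lemma Function.Commute.foldr_iterate {g : A → A} (hg : ∀ i, Function.Commute g (α i))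
    (n : ι → ℕ) (l : List ι) :
    Function.Commute g (l.foldr (fun i f => (α i)^[n i] ∘ f) id) := by
  induction l with
  | nil => exact Function.Commute.id_right
  | cons j l ih => exact ((hg j).iterate_right (n j)).comp_right ih

lemma List.foldr_iterate_add (hα : ∀ i j, Function.Commute (α i) (α j)) (m n : ι → ℕ)
    (l : List ι) :
    l.foldr (fun i f => (α i)^[(m + n) i] ∘ f) id =
      l.foldr (fun i f => (α i)^[m i] ∘ f) id ∘ l.foldr (fun i f => (α i)^[n i] ∘ f) id := by
  induction l with
  | nil => rfl
  | cons j l ih =>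
    have hcomm : Function.Commute (α j)^[n j] (l.foldr (fun i f => (α i)^[m i] ∘ f) id) :=
      Function.Commute.foldr_iterate α (fun i => (hα j i).iterate_left (n j)) m l
    funext a
    simp only [List.foldr_cons, Function.comp_apply]
    rw [congrFun ih a, Pi.add_apply, Function.iterate_add_apply, Function.comp_apply, hcomm.eq]

lemma alphaComp_zero {d : ℕ} (α : Fin d → A → A) : alphaComp α 0 = id := by
  simp [alphaComp]

lemma alphaComp_add {d : ℕ} (α : Fin d → A → A) (hα : ∀ i j, Function.Commute (α i) (α j))
    (m n : Fin d → ℕ) : alphaComp α (m + n) = alphaComp α m ∘ alphaComp α n :=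
  List.foldr_iterate_add α hα m n _

end Iterates

section InvariantCore

variable {M A : Type*} (φ : M → A → A)

def invariantCore (N : Set M) (S : Set A) : Set A :=
  ⋂ n ∈ N, φ n ⁻¹' S

variable {φ} {N N₁ N₂ : Set M} {S S₁ S₂ K : Set A}

lemma mem_invariantCore {a : A} : a ∈ invariantCore φ N S ↔ ∀ n ∈ N, φ n a ∈ S :=
  Set.mem_iInter₂

lemma invariantCore_subset [Zero M] (hφ : φ 0 = id) (hN : (0 : M) ∈ N) : invariantCore φ N S ⊆ S :=
  fun a ha => by simpa [hφ] using mem_invariantCore.1 ha 0 hN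

lemma invariantCore_mono (hN : N₂ ⊆ N₁) (hS : S₁ ⊆ S₂) :
    invariantCore φ N₁ S₁ ⊆ invariantCore φ N₂ S₂ :=
  fun _ ha => mem_invariantCore.2 fun n hn => hS (mem_invariantCore.1 ha n (hN hn))

lemma mapsTo_invariantCore [Add M] (hφ : ∀ m n, φ (m + n) = φ m ∘ φ n)
    (hN : ∀ m ∈ N, ∀ n ∈ N, m + n ∈ N) {n : M} (hn : n ∈ N) :
    Set.MapsTo (φ n) (invariantCore φ N S) (invariantCore φ N S) := fun a ha =>
  mem_invariantCore.2 fun m hm => by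
    simpa [hφ] using mem_invariantCore.1 ha (m + n) (hN m hm n hn)

lemma subset_invariantCore (hKS : K ⊆ S) (hK : ∀ n ∈ N, Set.MapsTo (φ n) K K) :
    K ⊆ invariantCore φ N S :=
  fun _ ha => mem_invariantCore.2 fun n hn => hKS (hK n hn ha)

end InvariantCore

/-- The ideal `𝒥_F` of the paper, for `κ = α`. -/
def kerAnnihilator {ι A : Type*} [DecidableEq ι] [MulZeroClass A] (κ : ι → A → A)
    (F : Finset ι) : Set A :=
  if F = ∅ then {0} else {a | ∀ s, (∀ j ∈ F, κ j s = 0) → a * s = 0}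

lemma kerAnnihilator_mono {ι A : Type*} [DecidableEq ι] [MulZeroClass A] (κ : ι → A → A) :
    Monotone (kerAnnihilator κ) := by
  intro F₁ F₂ hF a ha
  by_cases h₂ : F₂ = ∅
  · simpa [kerAnnihilator, h₂, Finset.subset_empty.1 (h₂ ▸ hF)] using ha
  by_cases h₁ : F₁ = ∅
  · simp_all [kerAnnihilator]
  simp only [kerAnnihilator, h₁, h₂, if_false, Set.mem_ofPred_eq] at ha ⊢
  exact fun s hs => ha s fun j hj => hs j (hF hj)

theorem stmt_10_general {A : Type*} [NonUnitalNormedRing A] [StarRing A]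
    [NormedSpace ℂ A]
    {d : ℕ} (α : Fin d → (A →⋆ₙₐ[ℂ] A))
    (hcomm : ∀ i j : Fin d, ∀ a : A, α i (α j a) = α j (α i a))
    (J : Finset (Fin d) → Set A)
    (hJ : ∀ F : Finset (Fin d), J F = if F = ∅ then ({0} : Set A)
      else {a : A | ∀ s : A, (∀ j ∈ F, α j s = 0) → a * s = 0})
    (I : Finset (Fin d) → Set A)
    (hI : ∀ F : Finset (Fin d), I F = ⋂ n ∈ {n : Fin d → ℕ | ∀ i ∈ F, n i = 0},
      (alphaComp (fun i => ⇑(α i)) n) ⁻¹' (J F)) :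
    (∀ F : Finset (Fin d), I F ⊆ J F) ∧
    (∀ F₁ F₂ : Finset (Fin d), F₁ ⊆ F₂ → J F₁ ⊆ J F₂ ∧ I F₁ ⊆ I F₂) ∧
    (∀ F : Finset (Fin d), ∀ n : Fin d → ℕ, (∀ i ∈ F, n i = 0) →
      ∀ a ∈ I F, alphaComp (fun i => ⇑(α i)) n a ∈ I F) ∧
    (∀ F : Finset (Fin d), ∀ K : Set A, IsTwoSidedIdealSet K → K ⊆ J F →
      (∀ n : Fin d → ℕ, (∀ i ∈ F, n i = 0) → ∀ a ∈ K, alphaComp (fun i => ⇑(α i)) n a ∈ K) →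
      K ⊆ I F) := by
  set φ := alphaComp fun i => ⇑(α i)
  obtain rfl : J = kerAnnihilator (fun j => ⇑(α j)) := funext hJ
  obtain rfl : I = fun F => invariantCore φ {n | ∀ i ∈ F, n i = 0} (kerAnnihilator (α ·) F) :=
    funext hI
  have hφ_add : ∀ m n, φ (m + n) = φ m ∘ φ n :=
    alphaComp_add _ fun i j a => hcomm i j a
  refine ⟨fun F => invariantCore_subset (alphaComp_zero _) fun _ _ => rfl,
    fun F₁ F₂ hF => ⟨kerAnnihilator_mono _ hF, invariantCore_mono
      (fun n hn i hi => hn i (hF hi)) (kerAnnihilator_mono _ hF)⟩,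
    fun F k hk => mapsTo_invariantCore (N := {n : Fin d → ℕ | ∀ i ∈ F, n i = 0}) hφ_add
      (fun m hm n hn i hi => by simp [hm i hi, hn i hi]) hk,
    fun F K _ hKJ hK => subset_invariantCore hKJ hK⟩

/-- For a C*-dynamical system `(A, α, ℤ₊^d)`, with
`𝒥_∅ = {0}`, `𝒥_F = (⋂_{j∈F} ker α_j)^⊥` for `F ≠ ∅`, and `𝓘_F = ⋂_{n ⊥ F} α_n⁻¹(𝒥_F)`:
(a) `𝓘_F ⊆ 𝒥_F`; (b) both families are partially ordered; (c) `𝓘_F` is `F^⊥`-invariant;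
(d) `𝓘_F` is the largest `F^⊥`-invariant two-sided ideal contained in `𝒥_F`. -/
theorem stmt_10 {A : Type*} [NonUnitalNormedRing A] [StarRing A] [CStarRing A]
    [NormedSpace ℂ A] [IsScalarTower ℂ A A] [SMulCommClass ℂ A A]
    [CompleteSpace A] [StarModule ℂ A]
    {d : ℕ} (hd : 1 ≤ d) (α : Fin d → (A →⋆ₙₐ[ℂ] A))
    (hcomm : ∀ i j : Fin d, ∀ a : A, α i (α j a) = α j (α i a))
    (J : Finset (Fin d) → Set A)
    (hJ : ∀ F : Finset (Fin d), J F = if F = ∅ then ({0} : Set A)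
      else {a : A | ∀ s : A, (∀ j ∈ F, α j s = 0) → a * s = 0})
    (I : Finset (Fin d) → Set A)
    (hI : ∀ F : Finset (Fin d), I F = ⋂ n ∈ {n : Fin d → ℕ | ∀ i ∈ F, n i = 0},
      (alphaComp (fun i => ⇑(α i)) n) ⁻¹' (J F)) :
    (∀ F : Finset (Fin d), I F ⊆ J F) ∧
    (∀ F₁ F₂ : Finset (Fin d), F₁ ⊆ F₂ → J F₁ ⊆ J F₂ ∧ I F₁ ⊆ I F₂) ∧
    (∀ F : Finset (Fin d), ∀ n : Fin d → ℕ, (∀ i ∈ F, n i = 0) →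
      ∀ a ∈ I F, alphaComp (fun i => ⇑(α i)) n a ∈ I F) ∧
    (∀ F : Finset (Fin d), ∀ K : Set A, IsTwoSidedIdealSet K → K ⊆ J F →
      (∀ n : Fin d → ℕ, (∀ i ∈ F, n i = 0) → ∀ a ∈ K, alphaComp (fun i => ⇑(α i)) n a ∈ K) →
      K ⊆ I F) :=
  stmt_10_general α hcomm J hJ I hI
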